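/- Let G be a connected graph with maximum degree 3 such that the set of vertices of degree 3 forms an independent set. If G contains a triangle or K_{2,3} as a subgraph, then pd(G) = 2; otherwise pd(G) = 1. -/

import Mathlib

open SimpleGraph

variable {V : Type*}

/-- Two edges are adjacent: distinct and sharing an endpoint. -/
def EdgesAdj (e₁ e₂ : Sym2 V) : Prop := e₁ ≠ e₂ ∧ ∃ v, v ∈ e₁ ∧ v ∈ e₂

/-- `F` is an edge-cut of `G` separating `x` and `y`. -/
def IsSepCut (G : SimpleGraph V) (F : Set (Sym2 V)) (x y : V) : Prop :=
  F ⊆ G.edgeSet ∧ ¬ (G.deleteEdges F).Reachable x y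

/-- `F` is a proper edge-cut (w.r.t. edge-coloring `c`) separating `x` and `y`. -/
def IsProperSepCut (G : SimpleGraph V) (c : Sym2 V → ℕ) (F : Set (Sym2 V)) (x y : V) : Prop :=
  IsSepCut G F x y ∧ ∀ e₁ ∈ F, ∀ e₂ ∈ F, EdgesAdj e₁ e₂ → c e₁ ≠ c e₂

/-- `F` is a rainbow edge-cut separating `x` and `y`. -/
def IsRainbowSepCut (G : SimpleGraph V) (c : Sym2 V → ℕ) (F : Set (Sym2 V)) (x y : V) : Prop :=
  IsSepCut G F x y ∧ Set.InjOn c F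

/-- `F` is a matching cut separating `x` and `y`. -/
def IsMatchingSepCut (G : SimpleGraph V) (F : Set (Sym2 V)) (x y : V) : Prop :=
  IsSepCut G F x y ∧ ∀ e₁ ∈ F, ∀ e₂ ∈ F, ¬ EdgesAdj e₁ e₂

/-- The proper disconnection number. -/
noncomputable def pd (G : SimpleGraph V) : ℕ :=
  sInf {k | ∃ c : Sym2 V → ℕ, (∀ e ∈ G.edgeSet, c e < k) ∧
    ∀ x y : V, x ≠ y → ∃ F, IsProperSepCut G c F x y}

/-- The rainbow disconnection number. -/
noncomputable def rd (G : SimpleGraph V) : ℕ :=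
  sInf {k | ∃ c : Sym2 V → ℕ, (∀ e ∈ G.edgeSet, c e < k) ∧
    ∀ x y : V, x ≠ y → ∃ F, IsRainbowSepCut G c F x y}

/-- The chromatic index. -/
noncomputable def chromIndex (G : SimpleGraph V) : ℕ :=
  sInf {k | ∃ c : Sym2 V → ℕ, (∀ e ∈ G.edgeSet, c e < k) ∧
    ∀ e₁ ∈ G.edgeSet, ∀ e₂ ∈ G.edgeSet, EdgesAdj e₁ e₂ → c e₁ ≠ c e₂}

/-- `G` contains a triangle. -/
def HasTriangle {V : Type*} (G : SimpleGraph V) : Prop :=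
  ∃ a b c : V, G.Adj a b ∧ G.Adj b c ∧ G.Adj a c

/-- `G` contains `K_{2,3}` as a subgraph. -/
def HasK23 {V : Type*} (G : SimpleGraph V) : Prop :=
  ∃ f : (Fin 2 ⊕ Fin 3) ↪ V,
    ∀ a b, (completeBipartiteGraph (Fin 2) (Fin 3)).Adj a b → G.Adj (f a) (f b)


/-!
With one colour a proper cut is a matching cut. A triangle `abc` admits no matching cut
separating `a` from `c`, and `K_{2,3}` none separating the two vertices of its small side: each
of their paths of length at most two loses an edge, and two of the lost edges meet.
Without these subgraphs, the edge boundary of a small set around `x` is a matching cut: `{x}`,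
`{x, a}` or `{x, a, n}` if `x` has degree at most two, and `{x, a, b}` if `x` has degree three,
for two neighbours `a`, `b` of `x` without a second common neighbour.

For two colours, colour the edges so that every vertex with two neighbours sees both colours;
induction on the edges gives such a colouring of a connected graph with a vertex of degree three.
Then the star of a vertex of degree at most two is a proper cut, and so is the boundary of
`{x, u}` for `x` of degree three and `u` a neighbour of `x` whose two other edges differ in colour.
-/

section EdgeBoundary

variable {G : SimpleGraph V} {S : Set V} {F : Set (Sym2 V)} {x y : V}

def edgeBoundary (G : SimpleGraph V) (S : Set V) : Set (Sym2 V) :=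
  {e | ∃ u w, G.Adj u w ∧ u ∈ S ∧ w ∉ S ∧ e = s(u, w)}

def AtMostOneAcross (G : SimpleGraph V) (S : Set V) : Prop :=
  (∀ v ∈ S, ∀ a b, G.Adj v a → G.Adj v b → a ∉ S → b ∉ S → a = b) ∧
    ∀ v ∉ S, ∀ a ∈ S, ∀ b ∈ S, G.Adj v a → G.Adj v b → a = b

lemma edgeBoundary_subset_edgeSet : edgeBoundary G S ⊆ G.edgeSet := by
  rintro _ ⟨u, w, huw, -, -, rfl⟩
  exact huw

lemma isSepCut_edgeBoundary (hx : x ∈ S) (hy : y ∉ S) : IsSepCut G (edgeBoundary G S) x y := by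
  refine ⟨edgeBoundary_subset_edgeSet, ?_⟩
  rintro ⟨p⟩
  refine hy ?_
  clear hy
  induction p with
  | nil => exact hx
  | cons h _ ih =>
    rw [deleteEdges_adj] at h
    exact ih (by_contra fun hv => h.2 ⟨_, _, h.1, hx, hv, rfl⟩)

lemma exists_of_edgesAdj_edgeBoundary {e₁ e₂ : Sym2 V} (he₁ : e₁ ∈ edgeBoundary G S)
    (he₂ : e₂ ∈ edgeBoundary G S) (h : EdgesAdj e₁ e₂) :
    ∃ v a b, a ≠ b ∧ G.Adj v a ∧ G.Adj v b ∧ e₁ = s(v, a) ∧ e₂ = s(v, b) ∧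
      (v ∈ S ∧ a ∉ S ∧ b ∉ S ∨ v ∉ S ∧ a ∈ S ∧ b ∈ S) := by
  obtain ⟨u₁, w₁, h₁, hu₁, hw₁, rfl⟩ := he₁
  obtain ⟨u₂, w₂, h₂, hu₂, hw₂, rfl⟩ := he₂
  obtain ⟨hne, v, hv₁, hv₂⟩ := h
  simp only [Sym2.mem_iff] at hv₁ hv₂
  rcases hv₁ with rfl | rfl <;> rcases hv₂ with rfl | rfl
  · exact ⟨v, w₁, w₂, by rintro rfl; exact hne rfl, h₁, h₂, rfl, rfl, .inl ⟨hu₁, hw₁, hw₂⟩⟩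
  · exact absurd hu₁ hw₂
  · exact absurd hu₂ hw₁
  · exact ⟨v, u₁, u₂, by rintro rfl; exact hne rfl, h₁.symm, h₂.symm, Sym2.eq_swap,
      Sym2.eq_swap, .inr ⟨hw₁, hu₁, hu₂⟩⟩

lemma isProperSepCut_edgeBoundary {c : Sym2 V → ℕ} (hx : x ∈ S) (hy : y ∉ S)
    (hin : ∀ v ∈ S, ∀ a b, a ≠ b → G.Adj v a → G.Adj v b → a ∉ S → b ∉ S →
      c s(v, a) ≠ c s(v, b))
    (hout : ∀ v ∉ S, ∀ a ∈ S, ∀ b ∈ S, a ≠ b → G.Adj v a → G.Adj v b → c s(v, a) ≠ c s(v, b)) :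
    IsProperSepCut G c (edgeBoundary G S) x y := by
  refine ⟨isSepCut_edgeBoundary hx hy, fun e₁ he₁ e₂ he₂ h => ?_⟩
  obtain ⟨v, a, b, hab, ha, hb, rfl, rfl, ⟨hv, haS, hbS⟩ | ⟨hv, haS, hbS⟩⟩ :=
    exists_of_edgesAdj_edgeBoundary he₁ he₂ h
  exacts [hin v hv a b hab ha hb haS hbS, hout v hv a haS b hbS hab ha hb]

lemma isMatchingSepCut_edgeBoundary (hx : x ∈ S) (hy : y ∉ S) (hS : AtMostOneAcross G S) :
    IsMatchingSepCut G (edgeBoundary G S) x y := by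
  refine ⟨isSepCut_edgeBoundary hx hy, fun e₁ he₁ e₂ he₂ h => ?_⟩
  obtain ⟨v, a, b, hab, ha, hb, -, -, ⟨hv, haS, hbS⟩ | ⟨hv, haS, hbS⟩⟩ :=
    exists_of_edgesAdj_edgeBoundary he₁ he₂ h
  exacts [hab (hS.1 v hv a b ha hb haS hbS), hab (hS.2 v hv a haS b hbS ha hb)]

lemma IsSepCut.symm (h : IsSepCut G F x y) : IsSepCut G F y x :=
  ⟨h.1, fun hr => h.2 hr.symm⟩

lemma IsMatchingSepCut.symm (h : IsMatchingSepCut G F x y) : IsMatchingSepCut G F y x :=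
  ⟨h.1.symm, h.2⟩

lemma IsProperSepCut.symm {c : Sym2 V → ℕ} (h : IsProperSepCut G c F x y) :
    IsProperSepCut G c F y x :=
  ⟨h.1.symm, h.2⟩

end EdgeBoundary

section Degree

variable {G : SimpleGraph V} [Fintype V] [DecidableRel G.Adj] {v a b : V}

lemma eq_of_adj_of_degree_le {s : Finset V} (hs : ∀ a ∈ s, G.Adj v a)
    (hdeg : G.degree v ≤ s.card + 1) (ha : G.Adj v a) (hb : G.Adj v b) (has : a ∉ s)
    (hbs : b ∉ s) : a = b := by
  classical
  by_contra hab
  have hsub : insert a (insert b s) ⊆ G.neighborFinset v := by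
    simp only [Finset.insert_subset_iff, mem_neighborFinset]
    exact ⟨ha, hb, fun w hw => (mem_neighborFinset ..).2 (hs w hw)⟩
  have := Finset.card_le_card hsub
  rw [Finset.card_insert_of_notMem (by simp [hab, has]), Finset.card_insert_of_notMem hbs,
    card_neighborFinset_eq_degree] at this
  omega

lemma eq_of_adj_of_degree_le_one (hdeg : G.degree v ≤ 1) (ha : G.Adj v a) (hb : G.Adj v b) :
    a = b :=
  eq_of_adj_of_degree_le (s := ∅) (by simp) hdeg ha hb (by simp) (by simp)

lemma eq_of_adj_of_degree_le_two {x : V} (hdeg : G.degree v ≤ 2) (hx : G.Adj v x)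
    (ha : G.Adj v a) (hb : G.Adj v b) (hax : a ≠ x) (hbx : b ≠ x) : a = b := by
  classical
  exact eq_of_adj_of_degree_le (s := {x}) (by simpa) hdeg ha hb (by simpa) (by simpa)

lemma eq_of_adj_of_degree_le_three {x x' : V} (hdeg : G.degree v ≤ 3) (hx : G.Adj v x)
    (hx' : G.Adj v x') (hxx' : x ≠ x') (ha : G.Adj v a) (hb : G.Adj v b) (hax : a ≠ x)
    (hbx : b ≠ x) (hax' : a ≠ x') (hbx' : b ≠ x') : a = b := by
  classical
  exact eq_of_adj_of_degree_le (s := {x, x'}) (by simp [hx, hx'])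
    (by rw [Finset.card_pair hxx']; exact hdeg) ha hb (by simp [hax, hax']) (by simp [hbx, hbx'])

lemma exists_adj_notMem_of_card_lt_degree {s : Finset V} (h : s.card < G.degree v) :
    ∃ u, G.Adj v u ∧ u ∉ s := by
  by_contra! hs
  have := Finset.card_le_card fun u hu => hs u ((mem_neighborFinset G v u).1 hu)
  rw [card_neighborFinset_eq_degree] at this
  omega

lemma exists_adj_adj_ne_of_one_lt_degree (h : 1 < G.degree v) :
    ∃ a b, G.Adj v a ∧ G.Adj v b ∧ a ≠ b := by
  rw [← card_neighborFinset_eq_degree, Finset.one_lt_card_iff] at h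
  simpa only [mem_neighborFinset] using h

lemma exists_adj_adj_adj_of_two_lt_degree (h : 2 < G.degree v) :
    ∃ a b c, G.Adj v a ∧ G.Adj v b ∧ G.Adj v c ∧ a ≠ b ∧ a ≠ c ∧ b ≠ c := by
  rw [← card_neighborFinset_eq_degree, Finset.two_lt_card_iff] at h
  simpa only [mem_neighborFinset] using h

lemma encard_neighborSet (v : V) : (G.neighborSet v).encard = G.degree v := by
  have := Set.encard_coe_eq_coe_finsetCard (G.neighborFinset v)
  rwa [coe_neighborFinset, card_neighborFinset_eq_degree] at this

lemma degree_le_two_of_adj (hdeg : ∀ v, G.degree v ≤ 3)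
    (hind : ∀ v w, G.degree v = 3 → G.degree w = 3 → ¬ G.Adj v w) (hab : G.Adj a b)
    (ha : G.degree a = 3) : G.degree b ≤ 2 := by
  have := hdeg b
  have : G.degree b ≠ 3 := fun hb => hind a b ha hb hab
  omega

end Degree

section Obstructions

variable {G : SimpleGraph V} {F : Set (Sym2 V)} {x y z : V}

lemma edgesAdj_left {a b c : V} (hbc : b ≠ c) : EdgesAdj s(a, b) s(a, c) :=
  ⟨fun h => hbc (Sym2.congr_right.1 h), a, Sym2.mem_mk_left a b, Sym2.mem_mk_left a c⟩

lemma edgesAdj_right {a b c : V} (hbc : b ≠ c) : EdgesAdj s(b, a) s(c, a) := by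
  simpa only [Sym2.eq_swap] using edgesAdj_left (a := a) hbc

lemma IsSepCut.mem_of_adj (h : IsSepCut G F x y) (hxy : G.Adj x y) : s(x, y) ∈ F :=
  by_contra fun hF => h.2 (Adj.reachable (by simp [hxy, hF]))

lemma IsSepCut.mem_or_mem_of_adj_of_adj (h : IsSepCut G F x y) (hxz : G.Adj x z)
    (hzy : G.Adj z y) : s(x, z) ∈ F ∨ s(z, y) ∈ F := by
  by_contra! hF
  exact h.2 ((Adj.reachable (v := z) (by simp [hxz, hF.1])).trans
    (Adj.reachable (by simp [hzy, hF.2])))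

lemma IsMatchingSepCut.not_adj_of_adj (h : IsMatchingSepCut G F x y) (hxz : G.Adj x z)
    (hzy : G.Adj z y) : ¬ G.Adj x y := by
  intro hxy
  have hmem := h.1.mem_of_adj hxy
  rcases h.1.mem_or_mem_of_adj_of_adj hxz hzy with hz | hz
  · exact h.2 _ hmem _ hz (edgesAdj_left hzy.ne')
  · exact h.2 _ hmem _ hz (edgesAdj_right hxz.ne)

/-- By pigeonhole, two of the three paths `x z i y` lose their edge on the same side. -/
lemma IsMatchingSepCut.false_of_common_adj (h : IsMatchingSepCut G F x y) {z : Fin 3 → V}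
    (hz : Function.Injective z) (hx : ∀ i, G.Adj x (z i)) (hy : ∀ i, G.Adj (z i) y) : False := by
  classical
  obtain ⟨i, j, hij, hside⟩ :=
    Fintype.exists_ne_map_eq_of_card_lt (fun i => decide (s(x, z i) ∈ F)) (by simp)
  have hzij : z i ≠ z j := hz.ne hij
  by_cases hi : s(x, z i) ∈ F
  · have hj : s(x, z j) ∈ F := by simpa [hi] using hside
    exact h.2 _ hi _ hj (edgesAdj_left hzij)
  · have hj : s(x, z j) ∉ F := by simpa [hi] using hside
    exact h.2 _ ((h.1.mem_or_mem_of_adj_of_adj (hx i) (hy i)).resolve_left hi)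
      _ ((h.1.mem_or_mem_of_adj_of_adj (hx j) (hy j)).resolve_left hj) (edgesAdj_right hzij)

lemma not_forall_isMatchingSepCut_of_hasTriangle (hG : HasTriangle G) :
    ¬ ∀ x y, x ≠ y → ∃ F, IsMatchingSepCut G F x y := by
  obtain ⟨a, b, c, hab, hbc, hac⟩ := hG
  intro h
  obtain ⟨F, hF⟩ := h a c hac.ne
  exact hF.not_adj_of_adj hab hbc hac

lemma not_forall_isMatchingSepCut_of_hasK23 (hG : HasK23 G) :
    ¬ ∀ x y, x ≠ y → ∃ F, IsMatchingSepCut G F x y := by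
  obtain ⟨f, hf⟩ := hG
  intro h
  obtain ⟨F, hF⟩ := h (f (.inl 0)) (f (.inl 1)) (fun h => by simpa using f.injective h)
  exact hF.false_of_common_adj (z := f ∘ .inr) (f.injective.comp Sum.inr_injective)
    (fun i => hf _ _ (by simp)) (fun i => hf _ _ (by simp))

lemma not_adj_of_not_hasTriangle (hT : ¬ HasTriangle G) (hxy : G.Adj x y) (hyz : G.Adj y z) :
    ¬ G.Adj x z :=
  fun hxz => hT ⟨x, y, z, hxy, hyz, hxz⟩

lemma hasK23_of_adj {p q a b c : V} (hpq : p ≠ q) (hab : a ≠ b) (hac : a ≠ c) (hbc : b ≠ c)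
    (hpa : G.Adj p a) (hpb : G.Adj p b) (hpc : G.Adj p c)
    (hqa : G.Adj q a) (hqb : G.Adj q b) (hqc : G.Adj q c) : HasK23 G := by
  have hinj : Function.Injective (Sum.elim ![p, q] ![a, b, c]) := by
    rintro (i | i) (j | j) h <;> fin_cases i <;> fin_cases j <;>
      simp_all [hpa.ne, hpb.ne, hpc.ne, hqa.ne, hqb.ne, hqc.ne, hpa.ne', hpb.ne', hpc.ne',
        hqa.ne', hqb.ne', hqc.ne']
  refine ⟨⟨_, hinj⟩, ?_⟩
  rintro (i | i) (j | j) h <;> simp only [completeBipartiteGraph_adj] at h <;> simp at h <;>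
    fin_cases i <;> fin_cases j <;>
    simp [hpa, hpb, hpc, hqa, hqb, hqc, hpa.symm, hpb.symm, hpc.symm, hqa.symm, hqb.symm,
      hqc.symm]

end Obstructions

section DisconnectionNumber

variable {G : SimpleGraph V}

def IsPDColoring (G : SimpleGraph V) (k : ℕ) (c : Sym2 V → ℕ) : Prop :=
  (∀ e ∈ G.edgeSet, c e < k) ∧ ∀ x y, x ≠ y → ∃ F, IsProperSepCut G c F x y

lemma pd_eq_of_isPDColoring {k : ℕ} (hk : ∃ c, IsPDColoring G k c)
    (hlt : ∀ j < k, ∀ c, ¬ IsPDColoring G j c) : pd G = k :=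
  le_antisymm (Nat.sInf_le hk)
    (le_csInf ⟨k, hk⟩ fun j ⟨c, hc⟩ => not_lt.1 fun hj => hlt j hj c hc)

lemma not_isPDColoring_zero {a b : V} (hab : G.Adj a b) (c : Sym2 V → ℕ) :
    ¬ IsPDColoring G 0 c :=
  fun hc => Nat.not_lt_zero _ (hc.1 s(a, b) hab)

lemma exists_isPDColoring_one_iff :
    (∃ c, IsPDColoring G 1 c) ↔ ∀ x y, x ≠ y → ∃ F, IsMatchingSepCut G F x y := by
  constructor
  · rintro ⟨c, hc, hcut⟩ x y hxy
    obtain ⟨F, hF, hproper⟩ := hcut x y hxy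
    have hc0 : ∀ e ∈ F, c e = 0 := fun e he => Nat.lt_one_iff.1 (hc e (hF.1 he))
    exact ⟨F, hF, fun e₁ he₁ e₂ he₂ h => hproper e₁ he₁ e₂ he₂ h (by rw [hc0 e₁ he₁, hc0 e₂ he₂])⟩
  · intro h
    refine ⟨fun _ => 0, fun _ _ => Nat.zero_lt_one, fun x y hxy => ?_⟩
    obtain ⟨F, hF, hmatch⟩ := h x y hxy
    exact ⟨F, hF, fun e₁ he₁ e₂ he₂ hadj => absurd hadj (hmatch e₁ he₁ e₂ he₂)⟩

end DisconnectionNumber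

section MatchingCuts

variable {G : SimpleGraph V} [Fintype V] [DecidableRel G.Adj] {x y a b n : V}

lemma atMostOneAcross_singleton (hx : G.degree x ≤ 1) : AtMostOneAcross G {x} :=
  ⟨fun _ hv _ _ ha hb _ _ => eq_of_adj_of_degree_le_one (hv ▸ hx) ha hb,
    fun _ _ _ ha _ hb _ _ => ha.trans hb.symm⟩

lemma atMostOneAcross_pair (hT : ¬ HasTriangle G) (hxa : G.Adj x a) (hx : G.degree x ≤ 2)
    (ha : G.degree a ≤ 2) : AtMostOneAcross G {x, a} := by
  refine ⟨?_, ?_⟩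
  · rintro v (rfl | rfl) p q hp hq hpS hqS <;>
      simp only [Set.mem_insert_iff, Set.mem_singleton_iff, not_or] at hpS hqS
    · exact eq_of_adj_of_degree_le_two hx hxa hp hq hpS.2 hqS.2
    · exact eq_of_adj_of_degree_le_two ha hxa.symm hp hq hpS.1 hqS.1
  · rintro v - p (rfl | rfl) q (rfl | rfl) hp hq
    · rfl
    · exact absurd hq (not_adj_of_not_hasTriangle hT hp hxa)
    · exact absurd hp (not_adj_of_not_hasTriangle hT hq hxa)
    · rfl

lemma atMostOneAcross_triple_of_adj_of_adj (hT : ¬ HasTriangle G) (hxa : G.Adj x a)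
    (hxb : G.Adj x b) (hab : a ≠ b) (hx : G.degree x ≤ 3) (ha : G.degree a ≤ 2)
    (hb : G.degree b ≤ 2) (hcommon : ∀ z, G.Adj a z → G.Adj b z → z = x) :
    AtMostOneAcross G {x, a, b} := by
  refine ⟨?_, ?_⟩
  · rintro v (rfl | rfl | rfl) p q hp hq hpS hqS <;>
      simp only [Set.mem_insert_iff, Set.mem_singleton_iff, not_or] at hpS hqS
    · exact eq_of_adj_of_degree_le_three hx hxa hxb hab hp hq hpS.2.1 hqS.2.1 hpS.2.2 hqS.2.2
    · exact eq_of_adj_of_degree_le_two ha hxa.symm hp hq hpS.1 hqS.1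
    · exact eq_of_adj_of_degree_le_two hb hxb.symm hp hq hpS.1 hqS.1
  · rintro v hv p (rfl | rfl | rfl) q (rfl | rfl | rfl) hp hq <;> try rfl
    · exact absurd hq (not_adj_of_not_hasTriangle hT hp hxa)
    · exact absurd hq (not_adj_of_not_hasTriangle hT hp hxb)
    · exact absurd hp (not_adj_of_not_hasTriangle hT hq hxa)
    · exact absurd (hcommon v hp.symm hq.symm) (fun h => hv (by simp [h]))
    · exact absurd hp (not_adj_of_not_hasTriangle hT hq hxb)
    · exact absurd (hcommon v hq.symm hp.symm) (fun h => hv (by simp [h]))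

lemma atMostOneAcross_path (hT : ¬ HasTriangle G) (hxa : G.Adj x a) (han : G.Adj a n)
    (hxb : G.Adj x b) (hbn : ¬ G.Adj b n) (hx : G.degree x ≤ 2) (ha : G.degree a ≤ 3)
    (hn : G.degree n ≤ 2) : AtMostOneAcross G {x, a, n} := by
  have hxn : x ≠ n := by rintro rfl; exact hbn hxb.symm
  refine ⟨?_, ?_⟩
  · rintro v (rfl | rfl | rfl) p q hp hq hpS hqS <;>
      simp only [Set.mem_insert_iff, Set.mem_singleton_iff, not_or] at hpS hqS
    · exact eq_of_adj_of_degree_le_two hx hxa hp hq hpS.2.1 hqS.2.1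
    · exact eq_of_adj_of_degree_le_three ha hxa.symm han hxn hp hq hpS.1 hqS.1 hpS.2.2 hqS.2.2
    · exact eq_of_adj_of_degree_le_two hn han.symm hp hq hpS.2.1 hqS.2.1
  · have hout : ∀ v, v ∉ ({x, a, n} : Set V) → G.Adj v x → ¬ G.Adj v n := by
      intro v hv hvx hvn
      have hvb : v = b := eq_of_adj_of_degree_le_two hx hxa hvx.symm hxb
        (fun h => hv (by simp [h])) (by rintro rfl; exact hbn han)
      exact hbn (hvb ▸ hvn)
    rintro v hv p (rfl | rfl | rfl) q (rfl | rfl | rfl) hp hq <;> try rfl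
    · exact absurd hq (not_adj_of_not_hasTriangle hT hp hxa)
    · exact absurd hq (hout v hv hp)
    · exact absurd hp (not_adj_of_not_hasTriangle hT hq hxa)
    · exact absurd hq (not_adj_of_not_hasTriangle hT hp han)
    · exact absurd hp (hout v hv hq)
    · exact absurd hp (not_adj_of_not_hasTriangle hT hq han)

lemma exists_adj_ne_ne_not_adj (hK : ¬ HasK23 G) (ha : 2 < G.degree a) (hxa : G.Adj x a)
    (hxb : G.Adj x b) (hab : a ≠ b) (hy : ¬ G.Adj a y ∨ G.Adj b y) :
    ∃ n, G.Adj a n ∧ n ≠ x ∧ n ≠ y ∧ ¬ G.Adj b n := by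
  classical
  obtain ⟨p, hap, hp⟩ :=
    exists_adj_notMem_of_card_lt_degree (s := {x, y}) (Finset.card_le_two.trans_lt ha)
  simp only [Finset.mem_insert, Finset.mem_singleton, not_or] at hp
  by_cases hbp : G.Adj b p
  · obtain ⟨q, haq, hq⟩ :=
      exists_adj_notMem_of_card_lt_degree (s := {x, p}) (Finset.card_le_two.trans_lt ha)
    simp only [Finset.mem_insert, Finset.mem_singleton, not_or] at hq
    have hbq : ¬ G.Adj b q := fun hbq => hK (hasK23_of_adj hab (Ne.symm hp.1) (Ne.symm hq.1)
      (Ne.symm hq.2) hxa.symm hap haq hxb.symm hbp hbq)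
    refine ⟨q, haq, hq.1, ?_, hbq⟩
    rintro rfl
    exact hbq (hy.resolve_left (not_not.2 haq))
  · exact ⟨p, hap, hp.1, hp.2, hbp⟩

lemma exists_isMatchingSepCut_of_adj_of_adj (hT : ¬ HasTriangle G) (hK : ¬ HasK23 G)
    (hdeg : ∀ v, G.degree v ≤ 3)
    (hind : ∀ v w, G.degree v = 3 → G.degree w = 3 → ¬ G.Adj v w) (hx : G.degree x ≤ 2)
    (hyx : y ≠ x) (hxa : G.Adj x a) (hxb : G.Adj x b) (hab : a ≠ b) (hya : y ≠ a)
    (hy : ¬ G.Adj a y ∨ G.Adj b y) : ∃ F, IsMatchingSepCut G F x y := by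
  by_cases ha : G.degree a ≤ 2
  · exact ⟨_, isMatchingSepCut_edgeBoundary (by simp) (by simp [hyx, hya])
      (atMostOneAcross_pair hT hxa hx ha)⟩
  · obtain ⟨n, han, -, hny, hbn⟩ := exists_adj_ne_ne_not_adj hK (by omega) hxa hxb hab hy
    have hn := degree_le_two_of_adj hdeg hind han (le_antisymm (hdeg a) (by omega))
    exact ⟨_, isMatchingSepCut_edgeBoundary (by simp) (by simp [hyx, hya, hny.symm])
      (atMostOneAcross_path hT hxa han hxb hbn hx (hdeg a) hn)⟩

lemma exists_isMatchingSepCut_of_degree_le_two (hT : ¬ HasTriangle G) (hK : ¬ HasK23 G)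
    (hdeg : ∀ v, G.degree v ≤ 3)
    (hind : ∀ v w, G.degree v = 3 → G.degree w = 3 → ¬ G.Adj v w) (hx : G.degree x ≤ 2)
    (hyx : y ≠ x) : ∃ F, IsMatchingSepCut G F x y := by
  by_cases hx₁ : G.degree x ≤ 1
  · exact ⟨_, isMatchingSepCut_edgeBoundary (S := {x}) rfl hyx (atMostOneAcross_singleton hx₁)⟩
  obtain ⟨a, b, hxa, hxb, hab⟩ := exists_adj_adj_ne_of_one_lt_degree (not_le.1 hx₁)
  have hnab : ¬ G.Adj a b := not_adj_of_not_hasTriangle hT hxa.symm hxb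
  have key : ∀ {a b}, G.Adj x a → G.Adj x b → a ≠ b → y ≠ a → ¬ G.Adj a y ∨ G.Adj b y →
      ∃ F, IsMatchingSepCut G F x y :=
    exists_isMatchingSepCut_of_adj_of_adj hT hK hdeg hind hx hyx
  by_cases hay : G.Adj a y
  · by_cases hby : G.Adj b y
    · exact key hxa hxb hab hay.ne' (.inr hby)
    · exact key hxb hxa hab.symm (by rintro rfl; exact hnab hay) (.inl hby)
  · by_cases hya : y = a
    · subst hya
      exact key hxb hxa hab.symm hab (.inl fun h => hnab h.symm)
    · exact key hxa hxb hab hya (.inl hay)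

/-- Two neighbours of `x` with no common neighbour besides `x` exist: otherwise, as they have
degree at most two, all three neighbours of `x` would share a second common neighbour. -/
lemma exists_isMatchingSepCut_of_degree_eq_three (hT : ¬ HasTriangle G) (hK : ¬ HasK23 G)
    (hdeg : ∀ v, G.degree v ≤ 3)
    (hind : ∀ v w, G.degree v = 3 → G.degree w = 3 → ¬ G.Adj v w) (hx : G.degree x = 3)
    (hxy : ¬ G.Adj x y) (hyx : y ≠ x) : ∃ F, IsMatchingSepCut G F x y := by
  obtain ⟨a, b, u, hxa, hxb, hxu, hab, hau, hbu⟩ :=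
    exists_adj_adj_adj_of_two_lt_degree (by omega : 2 < G.degree x)
  have ha := degree_le_two_of_adj hdeg hind hxa hx
  have hya : y ≠ a := fun h => hxy (h ▸ hxa)
  by_cases hcab : ∀ z, G.Adj a z → G.Adj b z → z = x
  · have hyb : y ≠ b := fun h => hxy (h ▸ hxb)
    exact ⟨_, isMatchingSepCut_edgeBoundary (by simp) (by simp [hyx, hya, hyb])
      (atMostOneAcross_triple_of_adj_of_adj hT hxa hxb hab hx.le ha
        (degree_le_two_of_adj hdeg hind hxb hx) hcab)⟩
  by_cases hcau : ∀ z, G.Adj a z → G.Adj u z → z = x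
  · have hyu : y ≠ u := fun h => hxy (h ▸ hxu)
    exact ⟨_, isMatchingSepCut_edgeBoundary (by simp) (by simp [hyx, hya, hyu])
      (atMostOneAcross_triple_of_adj_of_adj hT hxa hxu hau hx.le ha
        (degree_le_two_of_adj hdeg hind hxu hx) hcau)⟩
  push Not at hcab hcau
  obtain ⟨z, haz, hbz, hzx⟩ := hcab
  obtain ⟨z', haz', huz', hz'x⟩ := hcau
  obtain rfl : z' = z := eq_of_adj_of_degree_le_two ha hxa.symm haz' haz hz'x hzx
  exact (hK (hasK23_of_adj (Ne.symm hzx) hab hau hbu hxa hxb hxu haz.symm hbz.symm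
    huz'.symm)).elim

lemma exists_isMatchingSepCut (hT : ¬ HasTriangle G) (hK : ¬ HasK23 G)
    (hdeg : ∀ v, G.degree v ≤ 3)
    (hind : ∀ v w, G.degree v = 3 → G.degree w = 3 → ¬ G.Adj v w) (hxy : x ≠ y) :
    ∃ F, IsMatchingSepCut G F x y := by
  by_cases hx : G.degree x ≤ 2
  · exact exists_isMatchingSepCut_of_degree_le_two hT hK hdeg hind hx hxy.symm
  by_cases hy : G.degree y ≤ 2
  · obtain ⟨F, hF⟩ := exists_isMatchingSepCut_of_degree_le_two hT hK hdeg hind hy hxy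
    exact ⟨F, hF.symm⟩
  have hx₃ : G.degree x = 3 := le_antisymm (hdeg x) (by omega)
  have hy₃ : G.degree y = 3 := le_antisymm (hdeg y) (by omega)
  exact exists_isMatchingSepCut_of_degree_eq_three hT hK hdeg hind hx₃ (hind x y hx₃ hy₃)
    hxy.symm

end MatchingCuts

section DemandColoring

variable {G G' : SimpleGraph V} {W : V → Option Bool} {c c' : Sym2 V → Bool} {v d u : V}

def SeesBothColors (G : SimpleGraph V) (c : Sym2 V → Bool) (v : V) : Prop :=
  ∃ a b, G.Adj v a ∧ G.Adj v b ∧ c s(v, a) ≠ c s(v, b)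

/-- A demand `some β` marks `v` as the root of its component: it need only see the colour `β`,
and both colours once it has three neighbours. Other vertices must see both colours as soon as
they have two neighbours. -/
def MeetsDemand (G : SimpleGraph V) (c : Sym2 V → Bool) (v : V) : Option Bool → Prop
  | none => (G.neighborSet v).Nontrivial → SeesBothColors G c v
  | some β => (∀ a, G.Adj v a → ∃ b, G.Adj v b ∧ c s(v, b) = β) ∧
      (2 < (G.neighborSet v).encard → SeesBothColors G c v)

def RootsSeparated (G : SimpleGraph V) (W : V → Option Bool) : Prop :=
  ∀ r r', W r ≠ none → W r' ≠ none → G.Reachable r r' → r = r'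

def RootsCover (G : SimpleGraph V) (W : V → Option Bool) : Prop :=
  ∀ v a, G.Adj v a → ∃ r, W r ≠ none ∧ G.Reachable v r

lemma meetsDemand_congr (hadj : ∀ a, G'.Adj v a ↔ G.Adj v a) (hc : ∀ a, c' s(v, a) = c s(v, a))
    (w : Option Bool) : MeetsDemand G' c' v w ↔ MeetsDemand G c v w := by
  have hN : G'.neighborSet v = G.neighborSet v := Set.ext hadj
  cases w <;> simp only [MeetsDemand, SeesBothColors, hN, hadj, hc]

lemma meetsDemand_of_forall_not_adj (h : ∀ a, ¬ G.Adj v a) (w : Option Bool) :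
    MeetsDemand G c v w := by
  have hN : G.neighborSet v = ∅ := Set.eq_empty_of_forall_notMem h
  cases w with
  | none => exact fun ⟨a, ha, _⟩ => (h a ha).elim
  | some β => exact ⟨fun a ha => absurd ha (h a), fun h3 => by simp [hN] at h3⟩

lemma nontrivial_sdiff_singleton_of_two_lt_encard {s : Set V} (h : 2 < s.encard) (a : V) :
    (s \ {a}).Nontrivial := by
  rw [← Set.one_lt_encard_iff_nontrivial]
  refine lt_of_lt_of_le ?_ (Set.encard_tsub_one_le_encard_sdiff_singleton s a)
  exact lt_tsub_iff_right.2 (by simpa [one_add_one_eq_two] using h)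

lemma neighborSet_deleteEdges_singleton :
    (G.deleteEdges {s(d, u)}).neighborSet d = G.neighborSet d \ {u} := by
  ext a
  simp only [mem_neighborSet, deleteEdges_adj, Set.mem_singleton_iff, Set.mem_sdiff]
  constructor
  · rintro ⟨h, hne⟩
    exact ⟨h, fun hau => hne (hau ▸ rfl)⟩
  · rintro ⟨h, hne⟩
    refine ⟨h, fun he => ?_⟩
    rcases Sym2.eq_iff.1 he with ⟨-, rfl⟩ | ⟨-, rfl⟩
    exacts [hne rfl, h.ne rfl]

lemma SimpleGraph.Reachable.deleteEdges_or {r : V} (h : G.Reachable v r) (p q : V) :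
    (G.deleteEdges {s(p, q)}).Reachable v r ∨ (G.deleteEdges {s(p, q)}).Reachable v p ∨
      (G.deleteEdges {s(p, q)}).Reachable v q := by
  obtain ⟨w⟩ := h
  induction w with
  | nil => exact .inl .rfl
  | @cons a b _ hab _ ih =>
    by_cases he : s(a, b) = s(p, q)
    · rcases Sym2.eq_iff.1 he with ⟨rfl, -⟩ | ⟨rfl, -⟩
      exacts [.inr (.inl .rfl), .inr (.inr .rfl)]
    · have hab' : (G.deleteEdges {s(p, q)}).Adj a b := by simp [hab, he]
      exact ih.imp hab'.reachable.trans (Or.imp hab'.reachable.trans hab'.reachable.trans)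

lemma SimpleGraph.Reachable.exists_adj_of_adj {a : V} (h : G.Reachable v d) (hv : G.Adj v a) :
    ∃ b, G.Adj d b := by
  obtain ⟨p⟩ := h.symm
  cases p with
  | nil => exact ⟨a, hv⟩
  | cons h _ => exact ⟨_, h⟩

lemma deleteEdges_singleton_lt (h : G.Adj d u) : G.deleteEdges {s(d, u)} < G := by
  refine (deleteEdges_le _).lt_of_ne fun hG => ?_
  have h' : (G.deleteEdges {s(d, u)}).Adj d u := by rw [hG]; exact h
  simp at h'

lemma mk_ne_mk_of_ne_of_ne (hd : v ≠ d) (hu : v ≠ u) (a : V) : s(v, a) ≠ s(d, u) := by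
  intro h
  have := h ▸ Sym2.mem_mk_left v a
  rw [Sym2.mem_iff] at this
  tauto

lemma RootsSeparated.mono (h : RootsSeparated G W) (hle : G' ≤ G) : RootsSeparated G' W :=
  fun r r' hr hr' hreach => h r r' hr hr' (hreach.mono hle)

end DemandColoring

section DemandColoringStep

variable [DecidableEq V] {G G' : SimpleGraph V} {W : V → Option Bool} {c' : Sym2 V → Bool}
  {v d u : V} {x β : Bool}

lemma update_apply_of_adj_deleteEdges {a : V} (h : (G.deleteEdges {s(d, u)}).Adj v a) :
    Function.update c' s(d, u) x s(v, a) = c' s(v, a) :=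
  Function.update_of_ne (by simpa using (deleteEdges_adj.1 h).2) _ _

lemma SeesBothColors.of_deleteEdges (h : SeesBothColors (G.deleteEdges {s(d, u)}) c' v) :
    SeesBothColors G (Function.update c' s(d, u) x) v := by
  obtain ⟨a, b, ha, hb, hab⟩ := h
  exact ⟨a, b, ha.1, hb.1, by
    rwa [update_apply_of_adj_deleteEdges ha, update_apply_of_adj_deleteEdges hb]⟩

lemma ne_none_of_update_none {r : V} (hr : Function.update W d none r ≠ none) : W r ≠ none := by
  rw [Function.update_apply] at hr
  split_ifs at hr
  exacts [absurd rfl hr, hr]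

lemma RootsSeparated.update_none (h : RootsSeparated G W) :
    RootsSeparated G (Function.update W d none) :=
  fun r r' hr hr' => h r r' (ne_none_of_update_none hr) (ne_none_of_update_none hr')

lemma RootsSeparated.update_some (h : RootsSeparated G W)
    (hu : ∀ r, W r ≠ none → r ≠ u → ¬ G.Reachable r u) :
    RootsSeparated G (Function.update W u (some β)) := by
  intro r r' hr hr' hreach
  rw [Function.update_apply] at hr hr'
  split_ifs at hr hr' with h₁ h₂ h₂
  · exact h₁.trans h₂.symm
  · exact absurd (h₁ ▸ hreach.symm) (hu r' hr' h₂)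
  · exact absurd (h₂ ▸ hreach) (hu r hr h₁)
  · exact h r r' hr hr' hreach

lemma update_some_ne_none (b : Bool) {r : V} (hr : W r ≠ none) :
    Function.update W u (some b) r ≠ none := by
  rw [Function.update_apply]
  split_ifs <;> simp [hr]

lemma RootsCover.deleteEdges_of_mem (h : RootsCover G W) (hd : W d ≠ none) :
    RootsCover (G.deleteEdges {s(d, u)}) (Function.update W u (some β)) := by
  intro v a hva
  obtain ⟨r, hr, hvr⟩ := h v a (deleteEdges_adj.1 hva).1
  rcases hvr.deleteEdges_or d u with hvr | hvd | hvu
  · exact ⟨r, update_some_ne_none β hr, hvr⟩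
  · exact ⟨d, update_some_ne_none β hd, hvd⟩
  · exact ⟨u, by simp, hvu⟩

lemma RootsCover.deleteEdges_of_update_none (h : RootsCover G W)
    (hreach : (∃ f, (G.deleteEdges {s(d, u)}).Adj d f) → (G.deleteEdges {s(d, u)}).Reachable d u) :
    RootsCover (G.deleteEdges {s(d, u)})
      (Function.update (Function.update W d none) u (some β)) := by
  intro v a hva
  have hvd : (G.deleteEdges {s(d, u)}).Reachable v d → (G.deleteEdges {s(d, u)}).Reachable v u :=
    fun hvd => hvd.trans (hreach (hvd.exists_adj_of_adj hva))
  obtain ⟨r, hr, hvr⟩ := h v a (deleteEdges_adj.1 hva).1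
  rcases hvr.deleteEdges_or d u with hvr | hvd' | hvu
  · by_cases hrd : r = d
    · exact ⟨u, by simp, hvd (hrd ▸ hvr)⟩
    · exact ⟨r, update_some_ne_none β (by rwa [Function.update_of_ne hrd]), hvr⟩
  · exact ⟨u, by simp, hvd hvd'⟩
  · exact ⟨u, by simp, hvu⟩

lemma meetsDemand_of_deleteEdges_update_none (hdu : G.Adj d u)
    (hd : MeetsDemand (G.deleteEdges {s(d, u)}) c' d none) :
    MeetsDemand G (Function.update c' s(d, u) β) d (some β) := by
  refine ⟨fun _ _ => ⟨u, hdu, by simp⟩, fun h3 => (hd ?_).of_deleteEdges⟩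
  rw [neighborSet_deleteEdges_singleton]
  exact nontrivial_sdiff_singleton_of_two_lt_encard h3 u

lemma meetsDemand_of_deleteEdges_of_adj (hdu : G.Adj d u)
    (hd : MeetsDemand (G.deleteEdges {s(d, u)}) c' d (some β)) {f : V}
    (hf : (G.deleteEdges {s(d, u)}).Adj d f) :
    MeetsDemand G (Function.update c' s(d, u) (!β)) d (some β) := by
  obtain ⟨b, hb, hcb⟩ := hd.1 f hf
  have hcb' : Function.update c' s(d, u) (!β) s(d, b) = β := by
    rw [update_apply_of_adj_deleteEdges hb, hcb]
  exact ⟨fun _ _ => ⟨b, hb.1, hcb'⟩, fun _ => ⟨b, u, hb.1, hdu, by simp [hcb']⟩⟩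

lemma seesBothColors_of_deleteEdges (hdu : G.Adj d u)
    (hu : MeetsDemand (G.deleteEdges {s(d, u)}) c' u (some (!x)))
    (hN : (G.neighborSet u).Nontrivial) :
    SeesBothColors G (Function.update c' s(d, u) x) u := by
  obtain ⟨a, ha, had⟩ := hN.exists_ne d
  have ha' : (G.deleteEdges {s(d, u)}).Adj u a := by
    refine deleteEdges_adj.2 ⟨ha, fun h => ?_⟩
    rcases Sym2.eq_iff.1 h with ⟨rfl, -⟩ | ⟨-, rfl⟩
    exacts [hdu.ne rfl, had rfl]
  obtain ⟨b, hb, hcb⟩ := hu.1 a ha'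
  refine ⟨b, d, hb.1, hdu.symm, ?_⟩
  rw [update_apply_of_adj_deleteEdges hb, hcb, Sym2.eq_swap, Function.update_self]
  simp

lemma forall_meetsDemand_of_deleteEdges {W' : V → Option Bool} (hdu : G.Adj d u)
    (hWu : W u = none) (hc' : ∀ v, MeetsDemand (G.deleteEdges {s(d, u)}) c' v (W' v))
    (hW' : ∀ v, v ≠ d → v ≠ u → W' v = W v) (hW'u : W' u = some (!x))
    (hd : MeetsDemand G (Function.update c' s(d, u) x) d (W d)) :
    ∀ v, MeetsDemand G (Function.update c' s(d, u) x) v (W v) := by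
  intro v
  by_cases hvd : v = d
  · exact hvd ▸ hd
  by_cases hvu : v = u
  · subst hvu
    rw [hWu]
    exact seesBothColors_of_deleteEdges hdu (hW'u ▸ hc' v)
  rw [← hW' v hvd hvu, ← meetsDemand_congr (G' := G.deleteEdges {s(d, u)}) (c' := c')]
  · exact hc' v
  · intro a
    simp [mk_ne_mk_of_ne_of_ne hvd hvu a]
  · intro a
    exact (Function.update_of_ne (mk_ne_mk_of_ne_of_ne hvd hvu a) _ _).symm

lemma RootsSeparated.deleteEdges_of_update_none (h : RootsSeparated G W) (hdu : G.Adj d u)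
    (hd : W d ≠ none) :
    RootsSeparated (G.deleteEdges {s(d, u)})
      (Function.update (Function.update W d none) u (some β)) := by
  refine ((h.mono (deleteEdges_le _)).update_none).update_some fun r hr _ hru => ?_
  rw [Function.update_apply] at hr
  split_ifs at hr with hrd
  · exact hr rfl
  · exact hrd (h r d hr hd ((hru.mono (deleteEdges_le _)).trans hdu.symm.reachable))

lemma RootsSeparated.deleteEdges_of_not_reachable (h : RootsSeparated G W) (hdu : G.Adj d u)
    (hd : W d ≠ none) (hnr : ¬ (G.deleteEdges {s(d, u)}).Reachable d u) :
    RootsSeparated (G.deleteEdges {s(d, u)}) (Function.update W u (some β)) := by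
  refine (h.mono (deleteEdges_le _)).update_some fun r hr _ hru => ?_
  by_cases hrd : r = d
  · exact hnr (hrd ▸ hru)
  · exact hrd (h r d hr hd ((hru.mono (deleteEdges_le _)).trans hdu.symm.reachable))

end DemandColoringStep

/-- Induction on the edges: delete an edge `du` at a root `d`. If `du` is a bridge and `d` keeps
an edge, `u` becomes a further root demanding the colour of `d`, and `du` gets the other colour.
Otherwise `d` hands its root role to `u`, with the opposite demand, and `du` gets `d`'s colour. -/
theorem exists_forall_meetsDemand [Finite V] (G : SimpleGraph V) (W : V → Option Bool)
    (hsep : RootsSeparated G W) (hcover : RootsCover G W) :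
    ∃ c : Sym2 V → Bool, ∀ v, MeetsDemand G c v (W v) := by
  classical
  induction G using WellFoundedLT.induction generalizing W with
  | _ G ih =>
  by_cases hE : ∀ v a, ¬ G.Adj v a
  · exact ⟨fun _ => false, fun v => meetsDemand_of_forall_not_adj (hE v) _⟩
  push Not at hE
  obtain ⟨v₀, a₀, h₀⟩ := hE
  obtain ⟨d, hd, hv₀d⟩ := hcover v₀ a₀ h₀
  obtain ⟨β, hβ⟩ := Option.ne_none_iff_exists'.1 hd
  obtain ⟨u, hdu⟩ := hv₀d.exists_adj_of_adj h₀
  have hWu : W u = none := by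
    by_contra hu
    exact hdu.ne (hsep d u hd hu hdu.reachable)
  have hlt := deleteEdges_singleton_lt hdu
  by_cases hB : (∃ f, (G.deleteEdges {s(d, u)}).Adj d f) ∧
      ¬ (G.deleteEdges {s(d, u)}).Reachable d u
  · obtain ⟨⟨f, hf⟩, hnr⟩ := hB
    obtain ⟨c', hc'⟩ := ih _ hlt (Function.update W u (some β))
      (hsep.deleteEdges_of_not_reachable hdu hd hnr) (hcover.deleteEdges_of_mem hd)
    refine ⟨Function.update c' s(d, u) (!β), forall_meetsDemand_of_deleteEdges hdu hWu hc'
      (fun v _ hvu => Function.update_of_ne hvu _ _) (by simp) ?_⟩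
    rw [hβ]
    exact meetsDemand_of_deleteEdges_of_adj hdu (by simpa [hdu.ne, hβ] using hc' d) hf
  · obtain ⟨c', hc'⟩ := ih _ hlt (Function.update (Function.update W d none) u (some (!β)))
      (hsep.deleteEdges_of_update_none hdu hd)
      (hcover.deleteEdges_of_update_none fun hf => not_and_not_right.1 hB hf)
    refine ⟨Function.update c' s(d, u) β, forall_meetsDemand_of_deleteEdges hdu hWu hc'
      (fun v hvd hvu => by simp [hvd, hvu]) (by simp) ?_⟩
    rw [hβ]
    exact meetsDemand_of_deleteEdges_update_none hdu (by simpa [hdu.ne] using hc' d)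

theorem exists_forall_seesBothColors [Finite V] {G : SimpleGraph V} (hG : G.Preconnected)
    {w : V} (hw : 2 < (G.neighborSet w).encard) :
    ∃ c : Sym2 V → Bool, ∀ v, (G.neighborSet v).Nontrivial → SeesBothColors G c v := by
  classical
  obtain ⟨c, hc⟩ := exists_forall_meetsDemand G (Function.update (fun _ => none) w (some false))
    (fun r r' hr hr' _ => by simp_all [Function.update_apply])
    (fun v _ _ => ⟨w, by simp, hG v w⟩)
  refine ⟨c, fun v hv => ?_⟩
  have hcv := hc v
  by_cases hvw : v = w
  · subst hvw
    simp only [Function.update_self] at hcv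
    exact hcv.2 hw
  · simp only [Function.update_of_ne hvw] at hcv
    exact hcv hv

section TwoColors

variable {G : SimpleGraph V} {c : Sym2 V → Bool} {v x y : V}

lemma ne_of_eq_or_eq {p q a b : V} (hpq : c s(v, p) ≠ c s(v, q)) (hab : a ≠ b)
    (ha : a = p ∨ a = q) (hb : b = p ∨ b = q) : c s(v, a) ≠ c s(v, b) := by
  rcases ha with rfl | rfl <;> rcases hb with rfl | rfl <;>
    first | exact absurd rfl hab | exact hpq | exact hpq.symm

lemma Bool.toNat_ne_toNat {p q : Bool} (h : p ≠ q) : p.toNat ≠ q.toNat := by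
  cases p <;> cases q <;> simp_all

variable [Fintype V] [DecidableRel G.Adj]

lemma SeesBothColors.ne_of_degree_le_two (h : SeesBothColors G c v) (hdeg : G.degree v ≤ 2)
    {a b : V} (hab : a ≠ b) (ha : G.Adj v a) (hb : G.Adj v b) : c s(v, a) ≠ c s(v, b) := by
  obtain ⟨p, q, hp, hq, hpq⟩ := h
  have hqp : q ≠ p := by rintro rfl; exact hpq rfl
  have key : ∀ w, G.Adj v w → w = p ∨ w = q := fun w hw =>
    or_iff_not_imp_left.2 fun hwp => eq_of_adj_of_degree_le_two hdeg hp hw hq hwp hqp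
  exact ne_of_eq_or_eq hpq hab (key a ha) (key b hb)

lemma SeesBothColors.exists_adj_forall_ne (h : SeesBothColors G c v) (hdeg : G.degree v = 3) :
    ∃ u, G.Adj v u ∧ ∀ a b, a ≠ b → G.Adj v a → G.Adj v b → a ≠ u → b ≠ u →
      c s(v, a) ≠ c s(v, b) := by
  classical
  obtain ⟨p, q, hp, hq, hpq⟩ := h
  have hqp : q ≠ p := by rintro rfl; exact hpq rfl
  obtain ⟨u, hu, hupq⟩ := exists_adj_notMem_of_card_lt_degree (s := {p, q})
    (Finset.card_le_two.trans_lt (by omega : 2 < G.degree v))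
  simp only [Finset.mem_insert, Finset.mem_singleton, not_or] at hupq
  have key : ∀ w, G.Adj v w → w ≠ u → w = p ∨ w = q := fun w hw hwu =>
    or_iff_not_imp_left.2 fun hwp => eq_of_adj_of_degree_le_three hdeg.le hp hu
      (Ne.symm hupq.1) hw hq hwp hqp hwu (Ne.symm hupq.2)
  exact ⟨u, hu, fun a b hab ha hb hau hbu => ne_of_eq_or_eq hpq hab (key a ha hau) (key b hb hbu)⟩

lemma neighborSet_nontrivial_of_one_lt_degree (h : 1 < G.degree v) :
    (G.neighborSet v).Nontrivial := by
  rw [← Set.one_lt_encard_iff_nontrivial, encard_neighborSet]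
  exact_mod_cast h

lemma exists_isProperSepCut_of_degree_le_two
    (hc : ∀ v, (G.neighborSet v).Nontrivial → SeesBothColors G c v) (hx : G.degree x ≤ 2)
    (hyx : y ≠ x) : ∃ F, IsProperSepCut G (fun e => (c e).toNat) F x y := by
  refine ⟨_, isProperSepCut_edgeBoundary (S := {x}) rfl hyx ?_ ?_⟩
  · rintro v rfl a b hab ha hb - -
    exact Bool.toNat_ne_toNat ((hc v ⟨a, ha, b, hb, hab⟩).ne_of_degree_le_two hx hab ha hb)
  · rintro v - a rfl b rfl hab
    exact absurd rfl hab

lemma exists_isProperSepCut_of_degree_eq_three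
    (hc : ∀ v, (G.neighborSet v).Nontrivial → SeesBothColors G c v)
    (hdeg : ∀ v, G.degree v ≤ 3)
    (hind : ∀ v w, G.degree v = 3 → G.degree w = 3 → ¬ G.Adj v w) (hx : G.degree x = 3)
    (hy : G.degree y = 3) (hyx : y ≠ x) : ∃ F, IsProperSepCut G (fun e => (c e).toNat) F x y := by
  obtain ⟨u, hxu, hu⟩ :=
    (hc x (neighborSet_nontrivial_of_one_lt_degree (by omega))).exists_adj_forall_ne hx
  have hu₂ := degree_le_two_of_adj hdeg hind hxu hx
  have hyu : y ≠ u := by rintro rfl; omega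
  have hx' : ∀ v, G.Adj v x → v ∉ ({x, u} : Set V) → ∀ a b, a ≠ b → G.Adj v a → G.Adj v b →
      (c s(v, a)).toNat ≠ (c s(v, b)).toNat := fun v hvx _ a b hab ha hb =>
    Bool.toNat_ne_toNat ((hc v ⟨a, ha, b, hb, hab⟩).ne_of_degree_le_two
      (degree_le_two_of_adj hdeg hind hvx.symm hx) hab ha hb)
  refine ⟨_, isProperSepCut_edgeBoundary (S := {x, u}) (by simp) (by simp [hyx, hyu]) ?_ ?_⟩
  · rintro v (rfl | rfl) a b hab ha hb haS hbS <;>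
      simp only [Set.mem_insert_iff, Set.mem_singleton_iff, not_or] at haS hbS
    · exact Bool.toNat_ne_toNat (hu a b hab ha hb haS.2 hbS.2)
    · exact absurd (eq_of_adj_of_degree_le_two hu₂ hxu.symm ha hb haS.1 hbS.1) hab
  · rintro v hv a (rfl | rfl) b (rfl | rfl) hab ha hb
    · exact absurd rfl hab
    · exact hx' v ha hv _ _ hab ha hb
    · exact hx' v hb hv _ _ hab ha hb
    · exact absurd rfl hab

end TwoColors

lemma exists_isPDColoring_two [Fintype V] {G : SimpleGraph V} [DecidableRel G.Adj]
    (hG : G.Preconnected) (hdeg : ∀ v, G.degree v ≤ 3)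
    (hind : ∀ v w, G.degree v = 3 → G.degree w = 3 → ¬ G.Adj v w) {w : V}
    (hw : G.degree w = 3) : ∃ c, IsPDColoring G 2 c := by
  obtain ⟨c, hc⟩ := exists_forall_seesBothColors hG (w := w)
    (by rw [encard_neighborSet, hw]; norm_num)
  refine ⟨fun e => (c e).toNat, fun e _ => Bool.toNat_lt _, fun x y hxy => ?_⟩
  by_cases hx : G.degree x ≤ 2
  · exact exists_isProperSepCut_of_degree_le_two hc hx hxy.symm
  by_cases hy : G.degree y ≤ 2
  · obtain ⟨F, hF⟩ := exists_isProperSepCut_of_degree_le_two hc hy hxy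
    exact ⟨F, hF.symm⟩
  exact exists_isProperSepCut_of_degree_eq_three hc hdeg hind (by have := hdeg x; omega)
    (by have := hdeg y; omega) hxy.symm

theorem stmt11 {V : Type*} [Fintype V] (G : SimpleGraph V) [DecidableRel G.Adj]
    (hconn : G.Connected) (hdeg : G.maxDegree = 3)
    (hind : ∀ v w : V, G.degree v = 3 → G.degree w = 3 → ¬ G.Adj v w) :
    (HasTriangle G ∨ HasK23 G → pd G = 2) ∧
      (¬ (HasTriangle G ∨ HasK23 G) → pd G = 1) := by
  have hdeg₃ : ∀ v, G.degree v ≤ 3 := fun v => hdeg ▸ G.degree_le_maxDegree v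
  have : Nonempty V := hconn.nonempty
  obtain ⟨w, hw⟩ := G.exists_maximal_degree_vertex
  rw [hdeg] at hw
  obtain ⟨a, -, hwa, -⟩ := exists_adj_adj_ne_of_one_lt_degree (by omega : 1 < G.degree w)
  constructor
  · intro hTK
    refine pd_eq_of_isPDColoring (exists_isPDColoring_two hconn.preconnected hdeg₃ hind hw.symm)
      fun j hj c hc => ?_
    interval_cases j
    · exact not_isPDColoring_zero hwa c hc
    · exact hTK.elim not_forall_isMatchingSepCut_of_hasTriangle
        not_forall_isMatchingSepCut_of_hasK23 (exists_isPDColoring_one_iff.1 ⟨c, hc⟩)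
  · intro hTK
    refine pd_eq_of_isPDColoring (exists_isPDColoring_one_iff.2 fun x y hxy =>
      exists_isMatchingSepCut (hTK ∘ .inl) (hTK ∘ .inr) hdeg₃ hind hxy) fun j hj c hc => ?_
    obtain rfl : j = 0 := by omega
    exact not_isPDColoring_zero hwa c hc
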